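/- arXiv:2602.01938 — 6 statements merged into one kernel-verified Lean document; each statement's English description precedes it below -/
import Mathlib

section
/- Let n be a positive integer, let w : ℝⁿ → ℝ be a quadratic function w(x) = c + l(x) + B(x,x) with c ∈ ℝ, l a linear functional and B a symmetric bilinear form, so that the directional derivative of w at x along d equals l(d) + 2B(x,d). For any κ ∈ ℝ and any points x_j, x_k ∈ ℝⁿ with d = x_k − x_j, define the U-MUSCL left and right states w_L = κ(w(x_j)+w(x_k))/2 + (1−κ)(w(x_j) + (1/2)(l(d)+2B(x_j,d))) and w_R = κ(w(x_j)+w(x_k))/2 + (1−κ)(w(x_k) − (1/2)(l(d)+2B(x_k,d))). Then the jump vanishes: w_R − w_L = 0. -/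
/-- For a quadratic function `w(x) = c + l(x) + B(x,x)` on ℝⁿ (with `l` linear and `B` a
symmetric bilinear form, so the directional derivative of `w` at `x` along `d` is
`l(d) + 2B(x,d)`), the jump `w_R - w_L` of the U-MUSCL left/right states vanishes
for any value of the parameter κ. -/
theorem stmt_1 (n : ℕ) (hn : 0 < n)
    (c : ℝ) (l : (Fin n → ℝ) →ₗ[ℝ] ℝ)
    (B : (Fin n → ℝ) →ₗ[ℝ] (Fin n → ℝ) →ₗ[ℝ] ℝ)
    (hB : ∀ x y, B x y = B y x)
    (w : (Fin n → ℝ) → ℝ)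
    (hw : ∀ x, w x = c + l x + B x x)
    (κ : ℝ) (xj xk d : Fin n → ℝ) (hd : d = xk - xj)
    (wL wR : ℝ)
    (hwL : wL = κ * ((w xj + w xk) / 2)
      + (1 - κ) * (w xj + (1/2) * (l d + 2 * B xj d)))
    (hwR : wR = κ * ((w xj + w xk) / 2)
      + (1 - κ) * (w xk - (1/2) * (l d + 2 * B xk d))) :
    wR - wL = 0 := by
  subst hd hwL hwR
  simp only [hw, map_sub, LinearMap.sub_apply]
  rw [hB xk xj]
  ring
end

section
/- Let n be a positive integer, let w : ℝⁿ → ℝ be a quadratic function w(x) = c + l(x) + B(x,x) with c ∈ ℝ, l a linear functional and B a symmetric bilinear form, so that the directional derivative of w at x along d equals l(d) + 2B(x,d). For any points x_j, x_k ∈ ℝⁿ with d = x_k − x_j, the U-MUSCL states with κ = 1/2, namely w_L = (1/2)(w(x_j)+w(x_k))/2 + (1/2)(w(x_j) + (1/2)(l(d)+2B(x_j,d))) and w_R = (1/2)(w(x_j)+w(x_k))/2 + (1/2)(w(x_k) − (1/2)(l(d)+2B(x_k,d))), both equal the exact midpoint value: w_L = w((x_j+x_k)/2) and w_R = w((x_j+x_k)/2).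 -/
/-- For a quadratic function `w(x) = c + l(x) + B(x,x)` on ℝⁿ (with `l` linear and `B` a
symmetric bilinear form, so the directional derivative of `w` at `x` along `d` is
`l(d) + 2B(x,d)`), the U-MUSCL states with κ = 1/2 both equal the exact midpoint value. -/
theorem stmt_2 (n : ℕ) (hn : 0 < n)
    (c : ℝ) (l : (Fin n → ℝ) →ₗ[ℝ] ℝ)
    (B : (Fin n → ℝ) →ₗ[ℝ] (Fin n → ℝ) →ₗ[ℝ] ℝ)
    (hB : ∀ x y, B x y = B y x)
    (w : (Fin n → ℝ) → ℝ)
    (hw : ∀ x, w x = c + l x + B x x)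
    (xj xk d : Fin n → ℝ) (hd : d = xk - xj)
    (wL wR : ℝ)
    (hwL : wL = (1/2) * ((w xj + w xk) / 2)
      + (1/2) * (w xj + (1/2) * (l d + 2 * B xj d)))
    (hwR : wR = (1/2) * ((w xj + w xk) / 2)
      + (1/2) * (w xk - (1/2) * (l d + 2 * B xk d))) :
    wL = w (((1 : ℝ)/2) • (xj + xk)) ∧ wR = w (((1 : ℝ)/2) • (xj + xk)) := by
  subst hd hwL hwR
  simp only [hw, map_smul, map_add, map_sub, LinearMap.add_apply, LinearMap.sub_apply,
    LinearMap.smul_apply, smul_eq_mul]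
  rw [hB xj xk] at *
  constructor <;> ring
end

section
/- Let f : ℝ → ℝ be four times continuously differentiable on a neighborhood of 0. Then, as h → 0, [f(h/2) + (h/8)(f′(0) − f′(h))] − [f(0) + (h/2)f′(0) − (h³/24)f′′′(0)] = O(h⁴). -/
/-!
Expand `f (h / 2)` to third order and `f' h` to second order by Taylor's theorem with an
`O(h ^ (n + 1))` remainder. With the weight `h / 8` the `h²` terms cancel, and the
`h³ f'''(0)` coefficient is `1 / 48 - 1 / 16 = -1 / 24`.
-/

open Asymptotics Filter Topology Set Nat

section Taylor

variable {E : Type*} [NormedAddCommGroup E] [NormedSpace ℝ E] {f : ℝ → E} {x₀ : ℝ} {n : ℕ}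
  {s : Set ℝ}

theorem taylor_isBigO (hs : Convex ℝ s) (hx₀s : x₀ ∈ s) (hf : ContDiffOn ℝ (n + 1) f s) :
    (fun x ↦ f x - taylorWithinEval f n s x₀ x) =O[𝓝[s] x₀] fun x ↦ (x - x₀) ^ (n + 1) := by
  have hnext : (fun x ↦ (((n + 1 : ℝ) * n !)⁻¹ * (x - x₀) ^ (n + 1)) •
      iteratedDerivWithin (n + 1) f s x₀) =O[𝓝[s] x₀] fun x ↦ (x - x₀) ^ (n + 1) := by
    simpa using ((isBigO_refl (fun x ↦ (x - x₀) ^ (n + 1)) _).const_mul_left _).smul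
      (isBigO_const_const (iteratedDerivWithin (n + 1) f s x₀) one_ne_zero (𝓝[s] x₀) :
        _ =O[_] fun _ ↦ (1 : ℝ))
  have hrem := (taylor_isLittleO hs hx₀s (n := n + 1) (by exact_mod_cast hf)).isBigO
  refine (hrem.add hnext).congr_left fun x ↦ ?_
  rw [taylorWithinEval_succ]
  abel

theorem taylorWithinEval_of_isOpen (hs : IsOpen s) (hx₀s : x₀ ∈ s) :
    taylorWithinEval f n s x₀ = taylorWithinEval f n univ x₀ := by
  funext x
  simp only [taylor_within_apply, iteratedDerivWithin_univ, iteratedDerivWithin_of_isOpen hs hx₀s]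

theorem taylor_isBigO_nhds (hs : s ∈ 𝓝 x₀) (hf : ContDiffOn ℝ (n + 1) f s) :
    (fun x ↦ f x - taylorWithinEval f n univ x₀ x) =O[𝓝 x₀] fun x ↦ (x - x₀) ^ (n + 1) := by
  obtain ⟨r, hr, hball⟩ := Metric.mem_nhds_iff.mp hs
  have h := taylor_isBigO (convex_ball x₀ r) (Metric.mem_ball_self hr) (hf.mono hball)
  rwa [taylorWithinEval_of_isOpen Metric.isOpen_ball (Metric.mem_ball_self hr),
    nhdsWithin_eq_nhds.mpr (Metric.ball_mem_nhds x₀ hr)] at h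

end Taylor

/-- For `f` four times continuously differentiable on a neighborhood of 0, the
flux-correction form (with `C = 1/4`) satisfies
`f(h/2) + (h/8)(f′(0) − f′(h)) = f(0) + (h/2)f′(0) − (h³/24)f′′′(0) + O(h⁴)` as `h → 0`. -/
theorem stmt_9 (f : ℝ → ℝ) (s : Set ℝ) (hs : s ∈ nhds (0 : ℝ))
    (hf : ContDiffOn ℝ 4 f s) :
    (fun h : ℝ =>
        (f (h/2) + (h/8) * (deriv f 0 - deriv f h))
          - (f 0 + (h/2) * deriv f 0 - (h^3/24) * deriv^[3] f 0))
      =O[nhds 0] fun h : ℝ => h^4 := by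
  have hf' : ContDiffOn ℝ (2 + 1) (deriv f) (interior s) :=
    (hf.mono interior_subset).deriv_of_isOpen isOpen_interior (by norm_num)
  have hvalue : (fun h : ℝ ↦ f (h / 2) - taylorWithinEval f 3 univ 0 (h / 2)) =O[𝓝 0]
      fun h ↦ h ^ 4 := by
    refine ((taylor_isBigO_nhds (n := 3) hs hf).comp_tendsto
      (by simpa using (continuous_id.div_const (2 : ℝ)).tendsto 0)).trans ?_
    exact (isBigO_refl _ _).const_mul_left (1 / 16) |>.congr_left fun h ↦ by simp only [Function.comp_apply]; ring
  have hslope : (fun h : ℝ ↦ h / 8 * (deriv f h - taylorWithinEval (deriv f) 2 univ 0 h))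
      =O[𝓝 0] fun h ↦ h ^ 4 := by
    refine ((isBigO_refl (fun h : ℝ ↦ h / 8) _).mul
      (taylor_isBigO_nhds (interior_mem_nhds.mpr hs) hf')).trans ?_
    exact (isBigO_refl _ _).const_mul_left (1 / 8) |>.congr_left fun h ↦ by ring
  refine (hvalue.sub hslope).congr_left fun h ↦ ?_
  simp only [taylor_within_apply, Finset.sum_range_succ, Finset.sum_range_zero,
    iteratedDerivWithin_univ, ← iteratedDeriv_succ', ← iteratedDeriv_eq_iterate]
  norm_num [Nat.factorial]
  ring
end

section
/- Let f : ℝ → ℝ be four times continuously differentiable on a neighborhood of 0. Then, as h → 0, [f(h/2) + (h/8)(f′(0) − f′(h))] − (1/2)[(f(0) + (h/2)f′(0)) + (f(h) − (h/2)f′(h))] = O(h⁴). -/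
/-!
The flux difference is linear in `f` and vanishes on cubic polynomials (check `1, t, t², t³`).
Subtracting the cubic Taylor polynomial `P` of `f` at `0`, and using `P'` for `f'`, it becomes
`R (h/2) - R h / 2 + (h/8) Q h` with `R = f - P = O(h⁴)` and `Q = f' - P' = O(h³)`.
-/

open Asymptotics Filter Topology Finset Nat

theorem taylor_isBigO_of_mem_nhds {E : Type*} [NormedAddCommGroup E] [NormedSpace ℝ E]
    {f : ℝ → E} {x₀ : ℝ} {s : Set ℝ} {n : ℕ} (hs : s ∈ 𝓝 x₀)
    (hf : ContDiffOn ℝ (n + 1) f s) :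
    (fun x ↦ f x - ∑ k ∈ range (n + 1), ((k ! : ℝ)⁻¹ * (x - x₀) ^ k) • iteratedDeriv k f x₀)
      =O[𝓝 x₀] fun x ↦ (x - x₀) ^ (n + 1) := by
  obtain ⟨r, hr, hball⟩ := Metric.mem_nhds_iff.1 hs
  have hsum : ∀ m x, taylorWithinEval f m (Metric.ball x₀ r) x₀ x =
      ∑ k ∈ range (m + 1), ((k ! : ℝ)⁻¹ * (x - x₀) ^ k) • iteratedDeriv k f x₀ := fun m x ↦ by
    rw [taylor_within_apply]
    refine sum_congr rfl fun k _ ↦ ?_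
    rw [iteratedDerivWithin_of_isOpen Metric.isOpen_ball (Metric.mem_ball_self hr)]
  have hlittle := taylor_isLittleO (n := n + 1) (convex_ball x₀ r) (Metric.mem_ball_self hr)
    (by exact_mod_cast hf.mono hball)
  rw [nhdsWithin_eq_nhds.2 (Metric.ball_mem_nhds x₀ hr)] at hlittle
  have hterm : (fun x ↦ (((n + 1) ! : ℝ)⁻¹ * (x - x₀) ^ (n + 1)) • iteratedDeriv (n + 1) f x₀)
      =O[𝓝 x₀] fun x ↦ (x - x₀) ^ (n + 1) := by
    simpa using ((isBigO_refl (fun x : ℝ ↦ (x - x₀) ^ (n + 1)) (𝓝 x₀)).const_mul_left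
      ((n + 1) ! : ℝ)⁻¹).smul (isBigO_const_one ℝ (iteratedDeriv (n + 1) f x₀) (𝓝 x₀))
  refine (hlittle.isBigO.add hterm).congr_left fun x ↦ ?_
  rw [hsum, sum_range_succ _ (n + 1)]
  abel

theorem isBigO_pow_comp_div_const {g : ℝ → ℝ} {n : ℕ} (hg : g =O[𝓝 0] fun x ↦ x ^ n) (c : ℝ) :
    (fun x ↦ g (x / c)) =O[𝓝 0] fun x ↦ x ^ n := by
  have hc : Tendsto (fun x : ℝ ↦ x / c) (𝓝 0) (𝓝 0) := by
    simpa using (continuous_id.div_const c).tendsto 0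
  refine (hg.comp_tendsto hc).trans
    ((isBigO_const_mul_self (c ^ n)⁻¹ (fun x : ℝ ↦ x ^ n) _).congr_left fun x ↦ ?_)
  simp only [Function.comp_apply]
  ring

/-- For `f` four times continuously differentiable on a neighborhood of 0, the
flux-correction form (with `C = 1/4`) differs from the flux-average form only at
fourth order in `h` as `h → 0`. -/
theorem stmt_10 (f : ℝ → ℝ) (s : Set ℝ) (hs : s ∈ nhds (0 : ℝ))
    (hf : ContDiffOn ℝ 4 f s) :
    (fun h : ℝ =>
        (f (h/2) + (h/8) * (deriv f 0 - deriv f h))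
          - (1/2) * ((f 0 + (h/2) * deriv f 0) + (f h - (h/2) * deriv f h)))
      =O[nhds 0] fun h : ℝ => h^4 := by
  have hR := taylor_isBigO_of_mem_nhds (n := 3) hs (by exact_mod_cast hf)
  have hQ := taylor_isBigO_of_mem_nhds (n := 2) (interior_mem_nhds.2 hs)
    ((hf.mono interior_subset).deriv_of_isOpen isOpen_interior (by norm_num))
  simp only [sub_zero, smul_eq_mul, ← iteratedDeriv_succ'] at hR hQ
  set R := fun x ↦ f x - ∑ k ∈ range (3 + 1), ((k ! : ℝ)⁻¹ * x ^ k) * iteratedDeriv k f 0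
  set Q := fun x ↦
    deriv f x - ∑ k ∈ range (2 + 1), ((k ! : ℝ)⁻¹ * x ^ k) * iteratedDeriv (k + 1) f 0
  have hsplit : ∀ h : ℝ, (f (h/2) + (h/8) * (deriv f 0 - deriv f h))
      - (1/2) * ((f 0 + (h/2) * deriv f 0) + (f h - (h/2) * deriv f h))
      = R (h / 2) - 2⁻¹ * R h + (h / 8) * Q h := fun h ↦ by
    simp only [R, Q, sum_range_succ, sum_range_zero, factorial, zero_add, iteratedDeriv_zero,
      iteratedDeriv_one]
    ring
  simp only [hsplit]
  refine ((isBigO_pow_comp_div_const hR 2).sub (hR.const_mul_left _)).add ?_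
  exact ((isBigO_const_mul_self 8⁻¹ (fun h : ℝ ↦ h) _).mul hQ).congr
    (fun h ↦ by ring) (fun h ↦ by ring)
end

section
/- Let f : ℝ → ℝ be three times continuously differentiable on a neighborhood of 0 and let C ∈ ℝ. Then, as h → 0, [f(h/2) + (C h/2)(f′(0) − f′(h))] − (1/2)[(f(0) + (h/2)f′(0)) + (f(h) − (h/2)f′(h))] = (1/8 − C/2) f′′(0) h² + O(h³). In particular, if C ≠ 1/4 and f′′(0) ≠ 0, the flux-correction form differs from the flux-average form at second order in h. -/
/-!
With the Taylor remainders `R₂(h) = f h - f 0 - h f'(0) - h²/2 f''(0) = O(h³)` and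
`R₁(h) = f'(h) - f'(0) - h f''(0) = O(h²)` (each follows from the mean value inequality,
since `R₂' = R₁` and `R₁' = f'' - f''(0) = O(h)`), the difference of the two flux forms minus
`(1/8 - C/2) f''(0) h²` is exactly `R₂(h/2) - R₂(h)/2 + (1/4 - C/2) h R₁(h) = O(h³)`.
If the difference itself were `O(h³)`, then `(1/8 - C/2) f''(0) h² = O(h³)`, forcing the
coefficient to vanish.
-/

open Asymptotics Filter Topology

section Taylor

variable {E : Type*} [NormedAddCommGroup E] [NormedSpace ℝ E] {f : ℝ → E} {a : ℝ}

theorem isBigO_pow_succ_of_deriv {g : ℝ → E} {n : ℕ}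
    (hg : ∀ᶠ x in 𝓝 a, DifferentiableAt ℝ g x)
    (hg' : deriv g =O[𝓝 a] fun x => (x - a) ^ n) (ha : g a = 0) :
    g =O[𝓝 a] fun x => (x - a) ^ (n + 1) := by
  have hfderiv : fderiv ℝ g =O[𝓝 a] fun x => ‖x - a‖ ^ (n : ℝ) := by
    refine isBigO_norm_left.mp ?_
    simpa [← norm_deriv_eq_norm_fderiv, Real.rpow_natCast] using hg'.norm_norm
  refine isBigO_norm_right.mp ?_
  convert isBigO_norm_rpow_add_one_of_fderiv_of_apply_eq_zero (Nat.cast_nonneg n) hg hfderiv ha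
    using 2 with x
  rw [norm_pow, ← Real.rpow_natCast]
  push_cast
  rfl

theorem isBigO_sub_taylor_one (hf : ∀ᶠ x in 𝓝 a, DifferentiableAt ℝ f x)
    (hf' : DifferentiableAt ℝ (deriv f) a) :
    (fun x => f x - f a - (x - a) • deriv f a) =O[𝓝 a] fun x => (x - a) ^ 2 := by
  refine isBigO_pow_succ_of_deriv ?_ ?_ (by simp)
  · filter_upwards [hf] with x hx
    fun_prop
  · have hderiv : deriv (fun x => f x - f a - (x - a) • deriv f a)
        =ᶠ[𝓝 a] fun x => deriv f x - deriv f a := by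
      filter_upwards [hf] with x hx
      have hR : HasDerivAt (fun x => f x - f a - (x - a) • deriv f a)
          (deriv f x - (1 : ℝ) • deriv f a) x :=
        (hx.hasDerivAt.sub_const (f a)).sub (((hasDerivAt_id' x).sub_const a).smul_const _)
      simpa using hR.deriv
    simpa using hf'.isBigO_sub.congr' hderiv.symm EventuallyEq.rfl

theorem isBigO_sub_taylor_two (hf : ∀ᶠ x in 𝓝 a, DifferentiableAt ℝ f x)
    (hf' : ∀ᶠ x in 𝓝 a, DifferentiableAt ℝ (deriv f) x)
    (hf'' : DifferentiableAt ℝ (deriv (deriv f)) a) :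
    (fun x => f x - f a - (x - a) • deriv f a - ((x - a) ^ 2 / 2) • deriv (deriv f) a)
      =O[𝓝 a] fun x => (x - a) ^ 3 := by
  refine isBigO_pow_succ_of_deriv ?_ ?_ (by simp)
  · filter_upwards [hf] with x hx
    fun_prop
  · have hderiv : deriv (fun x => f x - f a - (x - a) • deriv f a
          - ((x - a) ^ 2 / 2) • deriv (deriv f) a)
        =ᶠ[𝓝 a] fun x => deriv f x - deriv f a - (x - a) • deriv (deriv f) a := by
      filter_upwards [hf] with x hx
      have hsq : HasDerivAt (fun x => (x - a) ^ 2 / 2) (x - a) x := by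
        simpa using (((hasDerivAt_id x).sub_const a).pow 2).div_const 2
      have hR : HasDerivAt (fun x => f x - f a - (x - a) • deriv f a
            - ((x - a) ^ 2 / 2) • deriv (deriv f) a)
          (deriv f x - (1 : ℝ) • deriv f a - (x - a) • deriv (deriv f) a) x :=
        ((hx.hasDerivAt.sub_const (f a)).sub
          (((hasDerivAt_id' x).sub_const a).smul_const _)).sub (hsq.smul_const _)
      simpa using hR.deriv
    exact (isBigO_sub_taylor_one hf' hf'').congr' hderiv.symm EventuallyEq.rfl

end Taylor

theorem eq_zero_of_mul_pow_isBigO_pow_succ {𝕜 : Type*} [NontriviallyNormedField 𝕜]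
    {c : 𝕜} {n : ℕ}
    (h : (fun x : 𝕜 => c * x ^ n) =O[𝓝 0] fun x => x ^ (n + 1)) : c = 0 := by
  by_contra hc
  have hlo : (fun x : 𝕜 => x ^ n) =o[𝓝[≠] 0] fun x => x ^ n :=
    (((isBigO_const_mul_left_iff hc).mp h).trans_isLittleO
      (isLittleO_pow_pow n.lt_succ_self)).mono nhdsWithin_le_nhds
  exact isLittleO_irrefl
    (eventually_nhdsWithin_of_forall (s := {0}ᶜ) (a := (0 : 𝕜))
      fun x hx => pow_ne_zero n hx).frequently hlo

noncomputable def fluxAverage (f f' : ℝ → ℝ) (h : ℝ) : ℝ :=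
  (1/2) * ((f 0 + (h/2) * f' 0) + (f h - (h/2) * f' h))

noncomputable def fluxCorrection (C : ℝ) (f f' : ℝ → ℝ) (h : ℝ) : ℝ :=
  f (h/2) + (C * h / 2) * (f' 0 - f' h)

theorem isBigO_fluxCorrection_sub_fluxAverage {f f' : ℝ → ℝ} {f'' : ℝ} (C : ℝ)
    (hf : (fun h => f h - f 0 - h * f' 0 - h ^ 2 / 2 * f'') =O[𝓝 0] fun h => h ^ 3)
    (hf' : (fun h => f' h - f' 0 - h * f'') =O[𝓝 0] fun h => h ^ 2) :
    (fun h => fluxCorrection C f f' h - fluxAverage f f' h - (1/8 - C/2) * f'' * h ^ 2)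
      =O[𝓝 0] fun h => h ^ 3 := by
  have hhalf : (fun h : ℝ => f (h/2) - f 0 - h/2 * f' 0 - (h/2) ^ 2 / 2 * f'')
      =O[𝓝 0] fun h => h ^ 3 := by
    have htendsto : Tendsto (fun h : ℝ => h / 2) (𝓝 0) (𝓝 0) := by
      simpa using (continuous_id.div_const (2 : ℝ)).tendsto 0
    exact (hf.comp_tendsto htendsto).trans <|
      (isBigO_const_mul_self (1/8 : ℝ) (· ^ 3) (𝓝 0)).congr_left fun h => by
        simp only [Function.comp_apply]
        ring
  have hmul : (fun h => h * (f' h - f' 0 - h * f'')) =O[𝓝 0] fun h => h ^ 3 := by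
    simpa [pow_succ', ← mul_assoc] using (isBigO_refl (fun h : ℝ => h) (𝓝 0)).mul hf'
  refine ((hhalf.sub (hf.const_mul_left (1/2))).add (hmul.const_mul_left (1/4 - C/2))).congr_left
    fun h => ?_
  simp only [fluxCorrection, fluxAverage]
  ring

/-- For `f` three times continuously differentiable on a neighborhood of 0 and any
constant `C`, the flux-correction form minus the flux-average form equals
`(1/8 − C/2) f′′(0) h² + O(h³)` as `h → 0`; in particular, if `C ≠ 1/4` and
`f′′(0) ≠ 0`, the difference is not `O(h³)`, i.e. the two forms differ at second
order in `h`. -/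
theorem stmt_11 (f : ℝ → ℝ) (s : Set ℝ) (hs : s ∈ nhds (0 : ℝ))
    (hf : ContDiffOn ℝ 3 f s) (C : ℝ) :
    ((fun h : ℝ =>
        ((f (h/2) + (C * h / 2) * (deriv f 0 - deriv f h))
            - (1/2) * ((f 0 + (h/2) * deriv f 0) + (f h - (h/2) * deriv f h)))
          - (1/8 - C/2) * deriv^[2] f 0 * h^2)
        =O[nhds 0] fun h : ℝ => h^3)
    ∧ (C ≠ 1/4 → deriv^[2] f 0 ≠ 0 →
        ¬ ((fun h : ℝ =>
            (f (h/2) + (C * h / 2) * (deriv f 0 - deriv f h))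
              - (1/2) * ((f 0 + (h/2) * deriv f 0) + (f h - (h/2) * deriv f h)))
          =O[nhds 0] fun h : ℝ => h^3)) := by
  obtain ⟨u, hus, hu, h0u⟩ := mem_nhds_iff.mp hs
  have hf0 : ContDiffOn ℝ 3 f u := hf.mono hus
  have hf1 : ContDiffOn ℝ 2 (deriv f) u := hf0.deriv_of_isOpen hu (by norm_num)
  have hf2 : ContDiffOn ℝ 1 (deriv (deriv f)) u := hf1.deriv_of_isOpen hu (by norm_num)
  have hu0 : u ∈ 𝓝 0 := hu.mem_nhds h0u
  have hdf := (hf0.differentiableOn (by norm_num)).eventually_differentiableAt hu0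
  have hdf1 := (hf1.differentiableOn (by norm_num)).eventually_differentiableAt hu0
  have hdf2 := ((hf2.differentiableOn (by norm_num)).eventually_differentiableAt hu0).self_of_nhds
  have hexpansion := isBigO_fluxCorrection_sub_fluxAverage (f'' := deriv^[2] f 0) C
    (by simpa using isBigO_sub_taylor_two hdf hdf1 hdf2)
    (by simpa using isBigO_sub_taylor_one hdf1 hdf2)
  refine ⟨hexpansion, fun hC hf'' hdiff => ?_⟩
  have hsecond : (fun h : ℝ => ((1/8 - C/2) * deriv^[2] f 0) * h ^ 2) =O[𝓝 0] fun h => h ^ 3 :=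
    (hdiff.sub hexpansion).congr_left fun h => by simp only [fluxCorrection, fluxAverage]; ring
  rcases mul_eq_zero.mp (eq_zero_of_mul_pow_isBigO_pow_succ hsecond) with hC' | hf''0
  · exact hC (by linarith)
  · exact hf'' hf''0
end

section
/- Let n be a positive integer and let f : ℝⁿ → ℝ be a cubic function, f(x) = c + l(x) + B(x,x) + T(x,x,x), where c ∈ ℝ, l is a linear functional, B is a symmetric bilinear form, and T is a symmetric trilinear form on ℝⁿ, so that the directional derivative of f at x along d equals l(d) + 2B(x,d) + 3T(x,x,d). Then for any points x_j, x_k ∈ ℝⁿ, writing d = x_k − x_j, D_j = l(d) + 2B(x_j,d) + 3T(x_j,x_j,d) and D_k = l(d) + 2B(x_k,d) + 3T(x_k,x_k,d), the flux-correction form equals the flux-average form exactly: f((x_j+x_k)/2) + (1/8)(D_j − D_k) = (1/2)[(f(x_j) + (1/2)D_j) + (f(x_k) − (1/2)D_k)]. -/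
/-- For a cubic function `f(x) = c + l(x) + B(x,x) + T(x,x,x)` on ℝⁿ (with `l` linear,
`B` a symmetric bilinear form and `T` a symmetric trilinear form, so the directional
derivative of `f` at `x` along `d` is `l(d) + 2B(x,d) + 3T(x,x,d)`), the flux-correction
form with `C = 1/4` equals the flux-average form exactly on every edge. -/
theorem stmt_12 (n : ℕ) (hn : 0 < n)
    (c : ℝ) (l : (Fin n → ℝ) →ₗ[ℝ] ℝ)
    (B : (Fin n → ℝ) →ₗ[ℝ] (Fin n → ℝ) →ₗ[ℝ] ℝ)
    (hB : ∀ x y, B x y = B y x)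
    (T : (Fin n → ℝ) →ₗ[ℝ] (Fin n → ℝ) →ₗ[ℝ] (Fin n → ℝ) →ₗ[ℝ] ℝ)
    (hT1 : ∀ x y z, T x y z = T y x z)
    (hT2 : ∀ x y z, T x y z = T x z y)
    (f : (Fin n → ℝ) → ℝ)
    (hf : ∀ x, f x = c + l x + B x x + T x x x)
    (xj xk d : Fin n → ℝ) (hd : d = xk - xj)
    (Dj Dk : ℝ)
    (hDj : Dj = l d + 2 * B xj d + 3 * T xj xj d)
    (hDk : Dk = l d + 2 * B xk d + 3 * T xk xk d) :
    f (((1 : ℝ)/2) • (xj + xk)) + (1/8) * (Dj - Dk)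
      = (1/2) * ((f xj + (1/2) * Dj) + (f xk - (1/2) * Dk)) := by
  subst hd hDj hDk
  simp only [hf, map_add, map_smul, map_sub, LinearMap.add_apply, LinearMap.smul_apply,
    LinearMap.sub_apply, smul_eq_mul]
  rw [hB xk xj, hT1 xk xj, hT2 xj xk xj, hT1 xk xj xk, hT2 xj xk xk, hT1 xj xk xk, hT2 xk xj xk]
  ring
end
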